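/- Let S be a set of 2m points drawn i.i.d. uniformly from {-1,1}^d with 8m²·(3/4)^d ≤ 1/10. Then with probability at least 9/10, no two distinct points of S are comparable, and hence every labeling of S by {-1,1} is consistent with some monotone Boolean function. -/

import Mathlib

open Finset Function

lemma antichain_extend {d n : ℕ} (S : Fin n → (Fin d → ({-1, 1} : Finset ℤ)))
    (hA : ∀ i j, i ≠ j →
      ¬ ((∀ k, (S i k : ℤ) ≤ (S j k : ℤ)) ∨ (∀ k, (S j k : ℤ) ≤ (S i k : ℤ))))
    (L : Fin n → ℤ) (hL : ∀ i, L i = 1 ∨ L i = -1) :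
    ∃ f : (Fin d → ℤ) → ℤ,
      (∀ x y : Fin d → ℤ, (∀ k, x k ≤ y k) → f x ≤ f y) ∧
      (∀ x, f x = 1 ∨ f x = -1) ∧
      (∀ i, f (fun k => (S i k : ℤ)) = L i) := by
  classical
  refine ⟨fun x => if ∃ i, L i = 1 ∧ ∀ k, (S i k : ℤ) ≤ x k then 1 else -1, ?_, ?_, ?_⟩
  · intro x y hxy
    by_cases hx : ∃ i, L i = 1 ∧ ∀ k, (S i k : ℤ) ≤ x k
    · obtain ⟨i, hi1, hile⟩ := hx
      have hy : ∃ i, L i = 1 ∧ ∀ k, (S i k : ℤ) ≤ y k :=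
        ⟨i, hi1, fun k => (hile k).trans (hxy k)⟩
      simp only [if_pos hy]
      split <;> norm_num
    · simp only [if_neg hx]
      split <;> norm_num
  · intro x; dsimp only; split
    · exact Or.inl rfl
    · exact Or.inr rfl
  · intro i
    dsimp only
    rcases hL i with hi | hi
    · rw [if_pos ⟨i, hi, fun k => le_refl _⟩, hi]
    · rw [if_neg, hi]
      rintro ⟨j, hj1, hjle⟩
      have hne : j ≠ i := by
        intro e; rw [e, hi] at hj1; norm_num at hj1
      exact hA j i hne (Or.inl hjle)

lemma fix_two_card {X : Type*} [Fintype X] [DecidableEq X] (c : X) {n : ℕ} {i j : Fin n}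
    (hij : i ≠ j) :
    (Finset.univ.filter (fun S : Fin n → X => S i = c ∧ S j = c)).card
      * Fintype.card X ^ 2 = Fintype.card X ^ n := by
  classical
  have key : ((Finset.univ.filter (fun S : Fin n → X => S i = c ∧ S j = c)) ×ˢ
      (Finset.univ : Finset (X × X))).card = (Finset.univ : Finset (Fin n → X)).card := by
    refine Finset.card_nbij' (fun p => update (update p.1 i p.2.1) j p.2.2)
      (fun T => (update (update T i c) j c, (T i, T j))) ?_ ?_ ?_ ?_
    · intro a _; exact mem_univ _
    · intro T _
      simp only [mem_coe, mem_product, mem_filter, mem_univ, true_and, and_true]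
      constructor
      · rw [update_of_ne hij, update_self]
      · rw [update_self]
    · rintro ⟨S, a, b⟩ hS
      simp only [mem_coe, mem_product, mem_filter, mem_univ, true_and, and_true] at hS
      obtain ⟨hSi, hSj⟩ := hS
      have h1 : update (update S i a) j b i = a := by rw [update_of_ne hij, update_self]
      have h2 : update (update S i a) j b j = b := by rw [update_self]
      dsimp only
      rw [h1, h2, Prod.mk.injEq]
      refine ⟨?_, rfl⟩
      funext k
      rcases eq_or_ne k j with rfl | hk
      · rw [update_self, hSj]
      · rw [update_of_ne hk]
        rcases eq_or_ne k i with rfl | hk2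
        · rw [update_self, hSi]
        · rw [update_of_ne hk2, update_of_ne hk, update_of_ne hk2]
    · intro T _
      dsimp only
      funext k
      rcases eq_or_ne k j with rfl | hk
      · rw [update_self]
      · rw [update_of_ne hk]
        rcases eq_or_ne k i with rfl | hk2
        · rw [update_self]
        · rw [update_of_ne hk2, update_of_ne hk, update_of_ne hk2]
  rw [Finset.card_product, Finset.card_univ, Finset.card_univ, Fintype.card_prod,
    Fintype.card_fun, Fintype.card_fin] at key
  rw [← key]; ring

lemma half_card (d : ℕ) (r : ℤ → ℤ → Prop) [DecidableRel r]
    (h3 : Fintype.card {q : ({-1,1} : Finset ℤ) × ({-1,1} : Finset ℤ) // r q.1 q.2} ≤ 3) :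
    (Finset.univ.filter
      (fun p : (Fin d → ({-1,1} : Finset ℤ)) × (Fin d → ({-1,1} : Finset ℤ)) =>
        ∀ k, r (p.1 k) (p.2 k))).card ≤ 3 ^ d := by
  classical
  set T := {q : ({-1,1} : Finset ℤ) × ({-1,1} : Finset ℤ) // r q.1 q.2}
  by_cases hT : Nonempty T
  · obtain ⟨t0⟩ := hT
    have := Finset.card_le_card_of_injOn
      (f := fun p : (Fin d → ({-1,1} : Finset ℤ)) × (Fin d → ({-1,1} : Finset ℤ)) =>
        fun k : Fin d => if h : r (p.1 k) (p.2 k) then (⟨(p.1 k, p.2 k), h⟩ : T) else t0)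
      (s := Finset.univ.filter (fun p => ∀ k, r (p.1 k) (p.2 k)))
      (t := (Finset.univ : Finset (Fin d → T)))
      (fun _ _ => mem_univ _) ?_
    · calc _ ≤ _ := this
        _ = Fintype.card (Fin d → T) := by rw [card_univ]
        _ = Fintype.card T ^ d := by rw [Fintype.card_fun, Fintype.card_fin]
        _ ≤ 3 ^ d := Nat.pow_le_pow_left h3 d
    · intro p hp q hq hpq
      simp only [coe_filter, Set.mem_setOf_eq, mem_univ, true_and] at hp hq
      have hval : ∀ k, ((p.1 k, p.2 k) : _ × _) = (q.1 k, q.2 k) := by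
        intro k
        have := congrFun hpq k
        dsimp only at this
        rw [dif_pos (hp k), dif_pos (hq k)] at this
        exact congrArg Subtype.val this
      have h1 : p.1 = q.1 := funext fun k => (Prod.mk.injEq _ _ _ _ ▸ hval k).1
      have h2 : p.2 = q.2 := funext fun k => (Prod.mk.injEq _ _ _ _ ▸ hval k).2
      exact Prod.ext h1 h2
  · rcases Nat.eq_zero_or_pos d with rfl | hd
    · calc _ ≤ _ := Finset.card_filter_le _ _
        _ ≤ 3 ^ 0 := by simp [Finset.card_univ]
    · convert Nat.zero_le _
      rw [Finset.card_eq_zero, Finset.filter_eq_empty_iff]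
      intro p _
      push_neg
      refine ⟨⟨0, hd⟩, fun hr => hT ⟨⟨(p.1 _, p.2 _), hr⟩⟩⟩

lemma comp_pair_card (d : ℕ) :
    (Finset.univ.filter
      (fun p : (Fin d → ({-1,1} : Finset ℤ)) × (Fin d → ({-1,1} : Finset ℤ)) =>
        (∀ k, (p.1 k : ℤ) ≤ (p.2 k : ℤ)) ∨ (∀ k, (p.2 k : ℤ) ≤ (p.1 k : ℤ)))).card
      ≤ 2 * 3 ^ d := by
  classical
  rw [Finset.filter_or]
  calc _ ≤ _ := Finset.card_union_le _ _
    _ ≤ 3 ^ d + 3 ^ d := by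
        gcongr
        · exact half_card d (· ≤ ·) (by decide)
        · exact half_card d (fun a b => b ≤ a) (by decide)
    _ = 2 * 3 ^ d := by ring

lemma pair_bound {X : Type*} [Fintype X] [DecidableEq X] (c : X) {n : ℕ} {i j : Fin n}
    (hij : i ≠ j) (P : X → X → Prop) [DecidableRel P] :
    (Finset.univ.filter (fun S : Fin n → X => P (S i) (S j))).card ≤
      (Finset.univ.filter (fun p : X × X => P p.1 p.2)).card *
      (Finset.univ.filter (fun S : Fin n → X => S i = c ∧ S j = c)).card := by
  classical
  rw [← Finset.card_product]
  apply Finset.card_le_card_of_injOn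
    (f := fun S => ((S i, S j), update (update S i c) j c))
  · intro S hS
    simp only [mem_coe, mem_filter, mem_univ, true_and] at hS
    simp only [mem_coe, mem_product, mem_filter, mem_univ, true_and]
    exact ⟨hS, by rw [update_of_ne hij, update_self], by rw [update_self]⟩
  · intro S _ S' _ hSS
    dsimp only at hSS
    rw [Prod.mk.injEq, Prod.mk.injEq] at hSS
    obtain ⟨⟨hi, hj⟩, hU⟩ := hSS
    funext k
    rcases eq_or_ne k j with rfl | hk
    · exact hj
    · rcases eq_or_ne k i with rfl | hk2
      · exact hi
      · have := congrFun hU k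
        rwa [update_of_ne hk, update_of_ne hk, update_of_ne hk2, update_of_ne hk2] at this

open Classical in
/-- For `2m` i.i.d. uniform points in `{-1,1}^d` with `8 m² (3/4)^d ≤ 1/10`, with
probability at least `9/10` no two distinct points are comparable, and hence every
`{-1,1}`-labeling of the points is consistent with some monotone Boolean function. -/
theorem stmt_3 (d m : ℕ) (hm : 1 ≤ m)
    (h : 8 * (m : ℝ) ^ 2 * (3 / 4) ^ d ≤ 1 / 10) :
    ((Finset.univ.filter
        (fun S : Fin (2 * m) → (Fin d → ({-1, 1} : Finset ℤ)) =>
          (∀ i j, i ≠ j →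
            ¬ ((∀ k, (S i k : ℤ) ≤ (S j k : ℤ)) ∨ (∀ k, (S j k : ℤ) ≤ (S i k : ℤ)))) ∧
          (∀ L : Fin (2 * m) → ℤ, (∀ i, L i = 1 ∨ L i = -1) →
            ∃ f : (Fin d → ℤ) → ℤ,
              (∀ x y : Fin d → ℤ, (∀ k, x k ≤ y k) → f x ≤ f y) ∧
              (∀ x, f x = 1 ∨ f x = -1) ∧
              (∀ i, f (fun k => (S i k : ℤ)) = L i)))).card : ℝ) /
      (Fintype.card (Fin (2 * m) → (Fin d → ({-1, 1} : Finset ℤ)))) ≥ 9 / 10 := by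
  classical
  set X := (Fin d → ({-1, 1} : Finset ℤ))
  have cardX : Fintype.card X = 2 ^ d := by
    show Fintype.card (Fin d → ({-1, 1} : Finset ℤ)) = 2 ^ d
    rw [Fintype.card_fun, Fintype.card_coe, Fintype.card_fin]
    rfl
  set A := fun S : Fin (2 * m) → X =>
    (∀ i j, i ≠ j →
      ¬ ((∀ k, (S i k : ℤ) ≤ (S j k : ℤ)) ∨ (∀ k, (S j k : ℤ) ≤ (S i k : ℤ)))) with hA
  -- Step 1: the full predicate is equivalent to the antichain predicate
  have hfilter :
      (Finset.univ.filter
        (fun S : Fin (2 * m) → X =>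
          A S ∧
          (∀ L : Fin (2 * m) → ℤ, (∀ i, L i = 1 ∨ L i = -1) →
            ∃ f : (Fin d → ℤ) → ℤ,
              (∀ x y : Fin d → ℤ, (∀ k, x k ≤ y k) → f x ≤ f y) ∧
              (∀ x, f x = 1 ∨ f x = -1) ∧
              (∀ i, f (fun k => (S i k : ℤ)) = L i)))) =
      Finset.univ.filter A := by
    apply Finset.filter_congr
    intro S _
    constructor
    · exact And.left
    · intro hAS
      exact ⟨hAS, fun L hL => antichain_extend S hAS L hL⟩
  rw [hfilter]
  -- Step 2: complement count
  have hsplit := Finset.card_filter_add_card_filter_not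
    (s := (Finset.univ : Finset (Fin (2 * m) → X))) (p := A)
  -- Step 3: union bound for the bad event
  have c0 : X := fun _ => ⟨1, by decide⟩
  have hBadSub : Finset.univ.filter (fun S : Fin (2 * m) → X => ¬ A S) ⊆
      (Finset.univ : Finset (Fin (2 * m))).offDiag.biUnion
        (fun p => Finset.univ.filter (fun S : Fin (2 * m) → X =>
          (∀ k, (S p.1 k : ℤ) ≤ (S p.2 k : ℤ)) ∨ (∀ k, (S p.2 k : ℤ) ≤ (S p.1 k : ℤ)))) := by
    intro S hS
    simp only [mem_filter, mem_univ, true_and, hA] at hS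
    push_neg at hS
    obtain ⟨i, j, hij, hc⟩ := hS
    rw [Finset.mem_biUnion]
    exact ⟨(i, j), Finset.mem_offDiag.2 ⟨mem_univ _, mem_univ _, hij⟩,
      Finset.mem_filter.2 ⟨mem_univ _, hc⟩⟩
  have hF : ∀ (i j : Fin (2 * m)), i ≠ j →
      (Finset.univ.filter (fun S : Fin (2 * m) → X => S i = c0 ∧ S j = c0)).card
        = (2 ^ d) ^ (2 * m - 2) := by
    intro i j hij
    have hk := fix_two_card c0 hij
    rw [cardX] at hk
    have hpos : 0 < (2 ^ d) ^ 2 := by positivity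
    apply Nat.eq_of_mul_eq_mul_right hpos
    rw [hk, ← pow_add, Nat.sub_add_cancel (Nat.le_mul_of_pos_right 2 hm)]
  have hterm : ∀ p ∈ (Finset.univ : Finset (Fin (2 * m))).offDiag,
      (Finset.univ.filter (fun S : Fin (2 * m) → X =>
        (∀ k, (S p.1 k : ℤ) ≤ (S p.2 k : ℤ)) ∨ (∀ k, (S p.2 k : ℤ) ≤ (S p.1 k : ℤ)))).card
        ≤ 2 * 3 ^ d * (2 ^ d) ^ (2 * m - 2) := by
    intro p hp
    have hij : p.1 ≠ p.2 := (Finset.mem_offDiag.1 hp).2.2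
    calc _ ≤ _ := pair_bound c0 hij
            (fun x y : X => (∀ k, (x k : ℤ) ≤ (y k : ℤ)) ∨ (∀ k, (y k : ℤ) ≤ (x k : ℤ)))
      _ ≤ 2 * 3 ^ d * (2 ^ d) ^ (2 * m - 2) := by
          rw [hF p.1 p.2 hij]
          exact Nat.mul_le_mul_right _ (comp_pair_card d)
  have hBad : (Finset.univ.filter (fun S : Fin (2 * m) → X => ¬ A S)).card
      ≤ 4 * m ^ 2 * (2 * 3 ^ d * (2 ^ d) ^ (2 * m - 2)) := by
    calc (Finset.univ.filter (fun S : Fin (2 * m) → X => ¬ A S)).card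
        ≤ ((Finset.univ : Finset (Fin (2 * m))).offDiag.biUnion
            (fun p => Finset.univ.filter (fun S : Fin (2 * m) → X =>
              (∀ k, (S p.1 k : ℤ) ≤ (S p.2 k : ℤ)) ∨
              (∀ k, (S p.2 k : ℤ) ≤ (S p.1 k : ℤ))))).card :=
          Finset.card_le_card hBadSub
      _ ≤ ∑ p ∈ (Finset.univ : Finset (Fin (2 * m))).offDiag,
            (Finset.univ.filter (fun S : Fin (2 * m) → X =>
              (∀ k, (S p.1 k : ℤ) ≤ (S p.2 k : ℤ)) ∨
              (∀ k, (S p.2 k : ℤ) ≤ (S p.1 k : ℤ)))).card :=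
          Finset.card_biUnion_le
      _ ≤ (Finset.univ : Finset (Fin (2 * m))).offDiag.card
            * (2 * 3 ^ d * (2 ^ d) ^ (2 * m - 2)) := by
          rw [← smul_eq_mul]
          exact Finset.sum_le_card_nsmul _ _ _ hterm
      _ ≤ 4 * m ^ 2 * (2 * 3 ^ d * (2 ^ d) ^ (2 * m - 2)) := by
          apply Nat.mul_le_mul_right
          calc (Finset.univ : Finset (Fin (2 * m))).offDiag.card
              ≤ ((Finset.univ : Finset (Fin (2 * m))) ×ˢ
                  (Finset.univ : Finset (Fin (2 * m)))).card := by
                apply Finset.card_le_card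
                intro x hx
                rw [Finset.mem_offDiag] at hx
                exact Finset.mem_product.2 ⟨hx.1, hx.2.1⟩
            _ = 4 * m ^ 2 := by
                rw [Finset.card_product, Finset.card_univ, Fintype.card_fin]; ring
  -- Final real arithmetic
  have hNnat : Fintype.card (Fin (2 * m) → X) = (2 ^ d) ^ (2 * m) := by
    rw [Fintype.card_fun, Fintype.card_fin, cardX]
  have hNpos : (0 : ℝ) < (Fintype.card (Fin (2 * m) → X) : ℝ) := by
    rw [hNnat]; positivity
  rw [ge_iff_le, le_div_iff₀ hNpos]
  have hcardA : ((Finset.univ.filter A).card : ℝ)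
      = (Fintype.card (Fin (2 * m) → X) : ℝ)
        - ((Finset.univ.filter (fun S : Fin (2 * m) → X => ¬ A S)).card : ℝ) := by
    have := hsplit
    rw [Finset.card_univ] at this
    push_cast [← this]
    ring
  rw [hcardA]
  have hR : (0 : ℝ) ≤ ((2 : ℝ) ^ d) ^ (2 * m - 2) := by positivity
  have h80 : (80 : ℝ) * (m : ℝ) ^ 2 * 3 ^ d ≤ 4 ^ d := by
    have h4 : (0 : ℝ) < (4 : ℝ) ^ d := by positivity
    have hdiv : ((3 : ℝ) / 4) ^ d = 3 ^ d / 4 ^ d := div_pow 3 4 d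
    rw [hdiv] at h
    have h' := mul_le_mul_of_nonneg_right h h4.le
    have e : 8 * (m : ℝ) ^ 2 * (3 ^ d / 4 ^ d) * 4 ^ d = 8 * (m : ℝ) ^ 2 * 3 ^ d := by
      field_simp
    rw [e] at h'
    linarith
  have hNvalNat : (2 ^ d) ^ (2 * m) = 4 ^ d * (2 ^ d) ^ (2 * m - 2) := by
    conv_lhs => rw [show 2 * m = 2 + (2 * m - 2) from
      (Nat.add_sub_cancel' (Nat.le_mul_of_pos_right 2 hm)).symm]
    rw [pow_add]
    congr 1
    rw [← pow_mul, mul_comm d 2, pow_mul]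
    norm_num
  have hNval : (Fintype.card (Fin (2 * m) → X) : ℝ)
      = 4 ^ d * ((2 : ℝ) ^ d) ^ (2 * m - 2) := by
    rw [hNnat, hNvalNat]
    push_cast
    ring
  have hbadR : ((Finset.univ.filter (fun S : Fin (2 * m) → X => ¬ A S)).card : ℝ)
      ≤ 8 * (m : ℝ) ^ 2 * 3 ^ d * ((2 : ℝ) ^ d) ^ (2 * m - 2) := by
    have := (Nat.cast_le (α := ℝ)).2 hBad
    push_cast at this
    calc _ ≤ _ := this
      _ = 8 * (m : ℝ) ^ 2 * 3 ^ d * ((2 : ℝ) ^ d) ^ (2 * m - 2) := by ring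
  nlinarith [hbadR, hNval, h80, hR,
    mul_le_mul_of_nonneg_right h80 hR]
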